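/- arXiv:2107.06145 — 7 statements merged into one kernel-verified Lean document; each statement's English description precedes it below -/
import Mathlib

section
/- For a connected graph G with m edges and real numbers p > q > 0, the general Albertson irregularity index satisfies A_p(G) ≥ m^(1/p - 1/q) · A_q(G), with equality if and only if |d(u) - d(v)| is constant over all edges uv of G. -/
/-!
`A_p(G)` is the `ℓ^p` norm of the vector of edge imbalances `|d(u) - d(v)|`, indexed by the `m`
edges. The inequality is the power-mean inequality `M_q ≤ M_p` for this vector: Jensen's
inequality for the strictly convex map `t ↦ t ^ (p / q)`, applied to the `q`-th powers of the
imbalances with uniform weights `1 / m`. Strict convexity makes equality hold exactly when all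
imbalances coincide.
-/

open Finset

/-- The general Albertson irregularity index
`A_p(G) = (∑_{uv ∈ E(G)} |d(u) - d(v)|^p)^(1/p)`,
computed as half the sum over ordered adjacent pairs. -/
noncomputable def Ap {V : Type*} [Fintype V] (G : SimpleGraph V) [DecidableRel G.Adj]
    (p : ℝ) : ℝ :=
  ((∑ u : V, ∑ v ∈ G.neighborFinset u,
      |(G.degree u : ℝ) - (G.degree v : ℝ)| ^ p) / 2) ^ (1 / p)

namespace Real

variable {ι : Type*} {s : Finset ι}

lemma rpow_sum_eq_card_rpow_mul_sum_rpow_iff (hs : s.Nonempty) {a : ι → ℝ}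
    (ha : ∀ i ∈ s, 0 ≤ a i) {r : ℝ} (hr : 1 < r) :
    (∑ i ∈ s, a i) ^ r = (#s : ℝ) ^ (r - 1) * ∑ i ∈ s, a i ^ r ↔
      ∀ i ∈ s, ∀ j ∈ s, a i = a j := by
  have hn : (0 : ℝ) < #s := by exact_mod_cast hs.card_pos
  have hJensen := (strictConvexOn_rpow hr).map_sum_eq_iff_of_pos (t := s)
    (w := fun _ => (#s : ℝ)⁻¹) (fun _ _ => inv_pos.2 hn) (by simp [hn.ne']) ha
  simp only [smul_eq_mul, ← mul_sum, mul_rpow (inv_nonneg.2 hn.le) (sum_nonneg ha),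
    inv_rpow hn.le] at hJensen
  rw [← hJensen, rpow_sub_one hn.ne', div_mul_eq_mul_div, inv_mul_eq_div, inv_mul_eq_div,
    div_eq_div_iff (by positivity) hn.ne', eq_div_iff hn.ne']
  constructor <;> intro h <;> linarith

variable {f : ι → ℝ} {p q : ℝ}

lemma card_rpow_mul_sum_rpow_rpow_rpow (hs : s.Nonempty) (hf : ∀ i ∈ s, 0 ≤ f i) (hq : 0 < q)
    (hp : 0 < p) :
    ((#s : ℝ) ^ (1 / p - 1 / q) * (∑ i ∈ s, f i ^ q) ^ (1 / q)) ^ p =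
      ((#s : ℝ) ^ (p / q - 1))⁻¹ * (∑ i ∈ s, f i ^ q) ^ (p / q) := by
  have hn : (0 : ℝ) < #s := by exact_mod_cast hs.card_pos
  have hX : 0 ≤ ∑ i ∈ s, f i ^ q := sum_nonneg fun i hi => rpow_nonneg (hf i hi) q
  have hpq : (1 / p - 1 / q) * p = -(p / q - 1) := by field_simp; ring
  rw [mul_rpow (by positivity) (by positivity), ← rpow_mul hn.le, ← rpow_mul hX, hpq,
    rpow_neg hn.le, one_div_mul_eq_div]

lemma sum_rpow_rpow_div (hf : ∀ i ∈ s, 0 ≤ f i) (hq : q ≠ 0) :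
    ∑ i ∈ s, (f i ^ q) ^ (p / q) = ∑ i ∈ s, f i ^ p :=
  sum_congr rfl fun i hi => by rw [← rpow_mul (hf i hi), mul_div_cancel₀ p hq]

lemma card_rpow_mul_sum_rpow_rpow_le (hf : ∀ i ∈ s, 0 ≤ f i) (hq : 0 < q) (hpq : q < p) :
    (#s : ℝ) ^ (1 / p - 1 / q) * (∑ i ∈ s, f i ^ q) ^ (1 / q) ≤ (∑ i ∈ s, f i ^ p) ^ (1 / p) := by
  have hp := hq.trans hpq
  rcases s.eq_empty_or_nonempty with rfl | hs
  · -- both sides vanish, since `0 ^ x = 0` for `x ≠ 0`, negative `x` included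
    simp [zero_rpow, hq.ne', hp.ne']
  have hfq : ∀ i ∈ s, 0 ≤ f i ^ q := fun i hi => rpow_nonneg (hf i hi) q
  have hX : 0 ≤ ∑ i ∈ s, f i ^ q := sum_nonneg hfq
  have hY : 0 ≤ ∑ i ∈ s, f i ^ p := sum_nonneg fun i hi => rpow_nonneg (hf i hi) p
  rw [← rpow_le_rpow_iff (by positivity) (by positivity) hp, ← rpow_mul hY,
    one_div_mul_cancel hp.ne', rpow_one, card_rpow_mul_sum_rpow_rpow_rpow hs hf hq hp,
    inv_mul_le_iff₀ (by positivity), ← sum_rpow_rpow_div (p := p) hf hq.ne']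
  exact rpow_sum_le_const_mul_sum_rpow_of_nonneg s ((one_le_div hq).2 hpq.le) hfq

lemma card_rpow_mul_sum_rpow_rpow_eq_iff (hf : ∀ i ∈ s, 0 ≤ f i) (hq : 0 < q) (hpq : q < p) :
    (#s : ℝ) ^ (1 / p - 1 / q) * (∑ i ∈ s, f i ^ q) ^ (1 / q) = (∑ i ∈ s, f i ^ p) ^ (1 / p) ↔
      ∀ i ∈ s, ∀ j ∈ s, f i = f j := by
  have hp := hq.trans hpq
  rcases s.eq_empty_or_nonempty with rfl | hs
  · simp [zero_rpow, hq.ne', hp.ne']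
  have hfq : ∀ i ∈ s, 0 ≤ f i ^ q := fun i hi => rpow_nonneg (hf i hi) q
  have hX : 0 ≤ ∑ i ∈ s, f i ^ q := sum_nonneg hfq
  have hY : 0 ≤ ∑ i ∈ s, f i ^ p := sum_nonneg fun i hi => rpow_nonneg (hf i hi) p
  rw [← rpow_left_inj (by positivity) (by positivity) hp.ne', ← rpow_mul hY,
    one_div_mul_cancel hp.ne', rpow_one, card_rpow_mul_sum_rpow_rpow_rpow hs hf hq hp,
    inv_mul_eq_iff_eq_mul₀ (by positivity), ← sum_rpow_rpow_div (p := p) hf hq.ne',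
    rpow_sum_eq_card_rpow_mul_sum_rpow_iff hs hfq ((one_lt_div hq).2 hpq)]
  exact forall₂_congr fun i hi => forall₂_congr fun j hj => rpow_left_inj (hf i hi) (hf j hj) hq.ne'

end Real

namespace SimpleGraph

variable {V : Type*} [Fintype V] (G : SimpleGraph V) [DecidableRel G.Adj]

def imbalance (e : Sym2 V) : ℝ :=
  Sym2.lift ⟨fun u v => |(G.degree u : ℝ) - G.degree v|, fun _ _ => abs_sub_comm _ _⟩ e

@[simp]
lemma imbalance_mk (u v : V) : G.imbalance s(u, v) = |(G.degree u : ℝ) - G.degree v| := rfl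

lemma imbalance_nonneg (e : Sym2 V) : 0 ≤ G.imbalance e := by
  induction e using Sym2.ind with
  | _ u v => exact abs_nonneg _

lemma sum_sum_neighborFinset_eq_two_nsmul_sum_edgeFinset {M : Type*} [AddCommMonoid M]
    (f : Sym2 V → M) :
    ∑ u, ∑ v ∈ G.neighborFinset u, f s(u, v) = 2 • ∑ e ∈ G.edgeFinset, f e := by
  classical
  calc ∑ u, ∑ v ∈ G.neighborFinset u, f s(u, v) = ∑ d : G.Dart, f d.edge := by
        rw [sum_sigma']
        refine sum_bij' (fun x hx => ⟨(x.1, x.2), by simpa using hx⟩) (fun d _ => ⟨d.fst, d.snd⟩)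
          (by simp) (by simp) (by simp) (by simp) (by simp)
    _ = ∑ e ∈ G.edgeFinset, ∑ d : G.Dart with d.edge = e, f d.edge :=
        (sum_fiberwise_of_maps_to (fun d _ => G.mem_edgeFinset.2 d.edge_mem) _).symm
    _ = ∑ e ∈ G.edgeFinset, 2 • f e := sum_congr rfl fun e he => by
        rw [sum_congr rfl fun d hd => congrArg f (mem_filter.1 hd).2, sum_const,
          G.dart_edge_fiber_card e (G.mem_edgeFinset.1 he)]
    _ = 2 • ∑ e ∈ G.edgeFinset, f e := (smul_sum ..).symm

lemma imbalance_eq_on_edgeFinset_iff :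
    (∀ e ∈ G.edgeFinset, ∀ e' ∈ G.edgeFinset, G.imbalance e = G.imbalance e') ↔
      ∃ c : ℝ, ∀ u v, G.Adj u v → |(G.degree u : ℝ) - G.degree v| = c := by
  constructor
  · intro h
    rcases G.edgeFinset.eq_empty_or_nonempty with hE | ⟨e₀, he₀⟩
    · exact ⟨0, fun u v huv => by simpa [hE] using G.mem_edgeFinset.2 (G.mem_edgeSet.2 huv)⟩
    · exact ⟨G.imbalance e₀, fun u v huv => h s(u, v) (G.mem_edgeFinset.2 huv) e₀ he₀⟩
  · rintro ⟨c, hc⟩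
    have hconst : ∀ e ∈ G.edgeFinset, G.imbalance e = c := fun e he => by
      induction e using Sym2.ind with
      | _ u v => exact hc u v (G.mem_edgeFinset.1 he)
    intro e he e' he'
    rw [hconst e he, hconst e' he']

end SimpleGraph

lemma Ap_eq_rpow_sum_edgeFinset {V : Type*} [Fintype V] (G : SimpleGraph V)
    [DecidableRel G.Adj] (p : ℝ) :
    Ap G p = (∑ e ∈ G.edgeFinset, G.imbalance e ^ p) ^ (1 / p) := by
  have hcount := G.sum_sum_neighborFinset_eq_two_nsmul_sum_edgeFinset (G.imbalance · ^ p)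
  simp only [SimpleGraph.imbalance_mk, nsmul_eq_mul] at hcount
  rw [Ap, hcount, Nat.cast_ofNat, mul_div_cancel_left₀ _ two_ne_zero]

theorem stmt0_general {V : Type*} [Fintype V]
    (G : SimpleGraph V) [DecidableRel G.Adj]
    (p q : ℝ) (hq : 0 < q) (hpq : q < p) :
    (G.edgeFinset.card : ℝ) ^ (1 / p - 1 / q) * Ap G q ≤ Ap G p ∧
    (Ap G p = (G.edgeFinset.card : ℝ) ^ (1 / p - 1 / q) * Ap G q ↔
      ∃ c : ℝ, ∀ u v : V, G.Adj u v → |(G.degree u : ℝ) - (G.degree v : ℝ)| = c) := by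
  have hf : ∀ e ∈ G.edgeFinset, 0 ≤ G.imbalance e := fun e _ => G.imbalance_nonneg e
  simp only [Ap_eq_rpow_sum_edgeFinset]
  exact ⟨Real.card_rpow_mul_sum_rpow_rpow_le hf hq hpq,
    eq_comm.trans <| (Real.card_rpow_mul_sum_rpow_rpow_eq_iff hf hq hpq).trans
      G.imbalance_eq_on_edgeFinset_iff⟩

theorem stmt0 {V : Type*} [Fintype V] [DecidableEq V]
    (G : SimpleGraph V) [DecidableRel G.Adj] (hG : G.Connected)
    (p q : ℝ) (hq : 0 < q) (hpq : q < p) :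
    (G.edgeFinset.card : ℝ) ^ (1 / p - 1 / q) * Ap G q ≤ Ap G p ∧
    (Ap G p = (G.edgeFinset.card : ℝ) ^ (1 / p - 1 / q) * Ap G q ↔
      ∃ c : ℝ, ∀ u v : V, G.Adj u v → |(G.degree u : ℝ) - (G.degree v : ℝ)| = c) :=
  stmt0_general G p q hq hpq
end

section
/- For a connected graph G with m edges and p ≥ 1, A_p(G) ≥ (m + p·Alb(G))^(1/p) − m^(1/p). -/
/-!
Summing over ordered adjacent pairs (each edge counted twice), put `a = |d(u) - d(v)|`.
Bernoulli's inequality `1 + p a ≤ (1 + a)^p` gives `2m + p · 2 Alb ≤ ∑ (1 + a)^p`, and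
Minkowski's inequality bounds the `p`-th root of the right side by `(∑ a^p)^(1/p) + (2m)^(1/p)`.
Dividing every term by `2` rescales all three `p`-th roots by the same factor `2^(1/p)`.
-/

open Finset

/-- The Albertson irregularity index `Alb(G) = A_1(G)`. -/
noncomputable def Alb {V : Type*} [Fintype V] (G : SimpleGraph V) [DecidableRel G.Adj] : ℝ :=
  (∑ u : V, ∑ v ∈ G.neighborFinset u, |(G.degree u : ℝ) - (G.degree v : ℝ)|) / 2

theorem rpow_card_add_mul_sum_le {ι : Type*} (s : Finset ι) (a : ι → ℝ)
    (ha : ∀ i ∈ s, 0 ≤ a i) {p : ℝ} (hp : 1 ≤ p) :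
    ((#s : ℝ) + p * ∑ i ∈ s, a i) ^ (1 / p) ≤
      (∑ i ∈ s, a i ^ p) ^ (1 / p) + (#s : ℝ) ^ (1 / p) := by
  have hsum : (#s : ℝ) + p * ∑ i ∈ s, a i = ∑ i ∈ s, (1 + p * a i) := by
    rw [sum_add_distrib, mul_sum, sum_const, nsmul_one]
  have hbernoulli : ∑ i ∈ s, (1 + p * a i) ≤ ∑ i ∈ s, (1 + a i) ^ p :=
    sum_le_sum fun i hi => one_add_mul_self_le_rpow_one_add (by linarith [ha i hi]) hp
  have hminkowski := Real.Lp_add_le_of_nonneg s hp (fun _ _ => zero_le_one) ha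
  simp only [Real.one_rpow, sum_const, nsmul_one] at hminkowski
  rw [hsum]
  calc (∑ i ∈ s, (1 + p * a i)) ^ (1 / p)
      ≤ (∑ i ∈ s, (1 + a i) ^ p) ^ (1 / p) := by
        refine Real.rpow_le_rpow (sum_nonneg fun i hi => ?_) hbernoulli (by positivity)
        nlinarith [ha i hi]
    _ ≤ (∑ i ∈ s, a i ^ p) ^ (1 / p) + (#s : ℝ) ^ (1 / p) := by linarith

theorem div_rpow_le_add_of_rpow_le {x y z c r : ℝ} (hx : 0 ≤ x) (hy : 0 ≤ y) (hz : 0 ≤ z)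
    (hc : 0 < c) (h : x ^ r ≤ y ^ r + z ^ r) : (x / c) ^ r ≤ (y / c) ^ r + (z / c) ^ r := by
  rw [Real.div_rpow hx hc.le, Real.div_rpow hy hc.le, Real.div_rpow hz hc.le, ← add_div]
  exact div_le_div_of_nonneg_right h (Real.rpow_nonneg hc.le r)

theorem stmt3_general {V : Type*} [Fintype V] [DecidableEq V]
    (G : SimpleGraph V) [DecidableRel G.Adj]
    (p : ℝ) (hp : 1 ≤ p) :
    ((G.edgeFinset.card : ℝ) + p * Alb G) ^ (1 / p) - (G.edgeFinset.card : ℝ) ^ (1 / p)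
      ≤ Ap G p := by
  set s := (univ : Finset V).sigma fun v => G.neighborFinset v
  set a : (Σ _ : V, V) → ℝ := fun x => |(G.degree x.1 : ℝ) - (G.degree x.2 : ℝ)|
  have ha : ∀ x ∈ s, 0 ≤ a x := fun _ _ => abs_nonneg _
  have hAp : Ap G p = ((∑ x ∈ s, a x ^ p) / 2) ^ (1 / p) := by rw [Ap, sum_sigma]
  have hAlb : Alb G = (∑ x ∈ s, a x) / 2 := by rw [Alb, sum_sigma]
  have hm : (#G.edgeFinset : ℝ) = #s / 2 := by
    rw [card_sigma]
    simp only [SimpleGraph.card_neighborFinset_eq_degree, G.sum_degrees_eq_twice_card_edges]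
    push_cast
    ring
  have hlhs : (#s : ℝ) / 2 + p * ((∑ x ∈ s, a x) / 2) = (#s + p * ∑ x ∈ s, a x) / 2 := by ring
  rw [hAp, hAlb, hm, sub_le_iff_le_add, hlhs]
  exact div_rpow_le_add_of_rpow_le
    (by have := sum_nonneg ha; positivity)
    (sum_nonneg fun x hx => Real.rpow_nonneg (ha x hx) p) (by positivity) two_pos
    (rpow_card_add_mul_sum_le s a ha hp)

theorem stmt3 {V : Type*} [Fintype V] [DecidableEq V]
    (G : SimpleGraph V) [DecidableRel G.Adj] (hG : G.Connected)
    (p : ℝ) (hp : 1 ≤ p) :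
    ((G.edgeFinset.card : ℝ) + p * Alb G) ^ (1 / p) - (G.edgeFinset.card : ℝ) ^ (1 / p)
      ≤ Ap G p :=
  stmt3_general G p hp
end

section
/- For a connected graph G with m edges and 0 < p < 1, A_p(G) ≤ (m + p·Alb(G))^(1/p) − m^(1/p). -/
open Finset

/-- Jensen-type inequality: for `0 < p ≤ 1`, `∑ f i ^ p ≤ |s|^(1-p) * (∑ f i)^p`. -/
lemma sum_rpow_le_card_rpow_mul {ι : Type*} (s : Finset ι) (f : ι → ℝ)
    (hf : ∀ i ∈ s, 0 ≤ f i) {p : ℝ} (hp0 : 0 < p) (hp1 : p ≤ 1) :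
    ∑ i ∈ s, f i ^ p ≤ (s.card : ℝ) ^ (1 - p) * (∑ i ∈ s, f i) ^ p := by
  rcases s.eq_empty_or_nonempty with rfl | hs
  · simp
    positivity
  have hN : (0 : ℝ) < s.card := by exact_mod_cast hs.card_pos
  have hq : (1 : ℝ) ≤ 1 / p := by rw [le_div_iff₀ hp0]; linarith
  have h := Real.arith_mean_le_rpow_mean s (fun _ => (s.card : ℝ)⁻¹)
      (fun i => f i ^ p) (fun i _ => by positivity)
      (by simp [Finset.sum_const, mul_inv_cancel₀ hN.ne'])
      (fun i hi => Real.rpow_nonneg (hf i hi) p) hq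
  simp only [one_div_one_div] at h
  have hz : ∑ i ∈ s, ((s.card : ℝ))⁻¹ * (f i ^ p) ^ (1 / p)
      = ∑ i ∈ s, ((s.card : ℝ))⁻¹ * f i :=
    Finset.sum_congr rfl fun i hi => by
      rw [one_div, Real.rpow_rpow_inv (hf i hi) hp0.ne']
  rw [hz] at h
  have hsum0 : 0 ≤ ∑ i ∈ s, f i := Finset.sum_nonneg hf
  rw [← Finset.mul_sum, ← Finset.mul_sum] at h
  have h2 := h
  have h3 : ((s.card : ℝ)⁻¹ * ∑ i ∈ s, f i) ^ p
      = ((s.card : ℝ) ^ p)⁻¹ * (∑ i ∈ s, f i) ^ p := by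
    rw [Real.mul_rpow (by positivity) hsum0, ← Real.inv_rpow hN.le]
  calc ∑ i ∈ s, f i ^ p = (s.card : ℝ) * ((s.card : ℝ)⁻¹ * ∑ i ∈ s, f i ^ p) := by
        field_simp
    _ ≤ (s.card : ℝ) * (((s.card : ℝ) ^ p)⁻¹ * (∑ i ∈ s, f i) ^ p) := by
        rw [← h3]; exact mul_le_mul_of_nonneg_left h2 hN.le
    _ = (s.card : ℝ) ^ (1 - p) * (∑ i ∈ s, f i) ^ p := by
        rw [Real.rpow_sub hN, Real.rpow_one]; ring

theorem stmt4 {V : Type*} [Fintype V] [DecidableEq V]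
    (G : SimpleGraph V) [DecidableRel G.Adj] (hG : G.Connected)
    (p : ℝ) (hp0 : 0 < p) (hp1 : p < 1) :
    Ap G p ≤
      ((G.edgeFinset.card : ℝ) + p * Alb G) ^ (1 / p) - (G.edgeFinset.card : ℝ) ^ (1 / p) := by
  classical
  set m : ℝ := (G.edgeFinset.card : ℝ) with hm_def
  by_cases hm0 : G.edgeFinset.card = 0
  · have hbot : G = ⊥ := by
      rwa [← SimpleGraph.edgeFinset_eq_empty, ← Finset.card_eq_zero]
    subst hbot
    have hnb : ∀ u : V, (⊥ : SimpleGraph V).neighborFinset u = ∅ := fun u => by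
      ext v; simp
    simp [Ap, Alb, hm_def, hm0, hnb, Real.zero_rpow (inv_ne_zero hp0.ne')]
  have hm : (0 : ℝ) < m := by
    rw [hm_def]
    exact_mod_cast Nat.pos_of_ne_zero hm0
  set A : ℝ := Alb G with hA_def
  have hA0 : 0 ≤ A := by
    rw [hA_def, Alb]
    positivity
  -- sigma set
  set t : Finset (Σ _ : V, V) := Finset.univ.sigma (fun u => G.neighborFinset u) with ht_def
  set f : (Σ _ : V, V) → ℝ := fun i => |(G.degree i.1 : ℝ) - (G.degree i.2 : ℝ)| with hf_def
  have hcard : (t.card : ℝ) = 2 * m := by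
    rw [ht_def, Finset.card_sigma]
    have : ∑ u : V, (G.neighborFinset u).card = 2 * G.edgeFinset.card := by
      simpa [SimpleGraph.card_neighborFinset_eq_degree] using
        G.sum_degrees_eq_twice_card_edges
    rw [hm_def]
    exact_mod_cast this
  have hS_eq : (∑ u : V, ∑ v ∈ G.neighborFinset u,
      |(G.degree u : ℝ) - (G.degree v : ℝ)| ^ p) = ∑ i ∈ t, f i ^ p :=
    Finset.sum_sigma' Finset.univ (fun u => G.neighborFinset u)
      (fun a b => |(G.degree a : ℝ) - (G.degree b : ℝ)| ^ p)
  have hA_eq : ∑ i ∈ t, f i = 2 * A := by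
    rw [hA_def, Alb,
      ← Finset.sum_sigma' Finset.univ (fun u => G.neighborFinset u)
        (fun a b => |(G.degree a : ℝ) - (G.degree b : ℝ)|)]
    ring
  have key1 : ∑ i ∈ t, f i ^ p ≤ (2 * m) ^ (1 - p) * (2 * A) ^ p := by
    rw [← hcard, ← hA_eq]
    exact sum_rpow_le_card_rpow_mul t f (fun i _ => abs_nonneg _) hp0 hp1.le
  have hS0 : 0 ≤ ∑ i ∈ t, f i ^ p := Finset.sum_nonneg fun i _ => by positivity
  have key2 : (∑ i ∈ t, f i ^ p) / 2 ≤ m ^ (1 - p) * A ^ p := by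
    have h2 : (2 * m) ^ (1 - p) * (2 * A) ^ p = 2 * (m ^ (1 - p) * A ^ p) := by
      rw [Real.mul_rpow (by norm_num) hm.le, Real.mul_rpow (by norm_num) hA0]
      have : (2 : ℝ) ^ (1 - p) * 2 ^ p = 2 := by
        rw [← Real.rpow_add (by norm_num)]; norm_num
      rw [show (2:ℝ) * (m ^ (1 - p) * A ^ p) = (2 ^ (1-p) * 2 ^ p) * (m ^ (1 - p) * A ^ p) by
        rw [this]]
      ring
    linarith [key1, h2 ▸ key1]
  -- Ap bound
  have hAp : Ap G p ≤ m ^ ((1 - p) / p) * A := by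
    rw [Ap, hS_eq]
    have step : ((∑ i ∈ t, f i ^ p) / 2) ^ (1 / p) ≤ (m ^ (1 - p) * A ^ p) ^ (1 / p) :=
      Real.rpow_le_rpow (by positivity) key2 (by positivity)
    refine step.trans_eq ?_
    rw [Real.mul_rpow (by positivity) (by positivity), ← Real.rpow_mul hm.le,
      mul_one_div, one_div, Real.rpow_rpow_inv hA0 hp0.ne']
  -- Bernoulli bound
  have hb := one_add_mul_self_le_rpow_one_add
      (s := p * A / m) ((by positivity : (0:ℝ) ≤ p * A / m).trans' (by norm_num)) (p := 1 / p) (by rw [le_div_iff₀ hp0]; linarith)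
  have hb1 : 1 + A / m ≤ (1 + p * A / m) ^ (1 / p) := by
    have : 1 / p * (p * A / m) = A / m := by field_simp
    linarith [this ▸ hb]
  have hb2 : m ^ (1 / p) * (1 + A / m) ≤ (m + p * A) ^ (1 / p) := by
    have hmul : m ^ (1 / p) * (1 + p * A / m) ^ (1 / p) = (m + p * A) ^ (1 / p) := by
      rw [← Real.mul_rpow hm.le (by positivity)]
      congr 1
      field_simp
    calc m ^ (1 / p) * (1 + A / m) ≤ m ^ (1 / p) * (1 + p * A / m) ^ (1 / p) :=
          mul_le_mul_of_nonneg_left hb1 (by positivity)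
      _ = (m + p * A) ^ (1 / p) := hmul
  have hpow : m ^ (1 / p) * (A / m) = m ^ ((1 - p) / p) * A := by
    have h1 : (1 - p) / p = 1 / p - 1 := by field_simp
    rw [h1, Real.rpow_sub hm, Real.rpow_one]
    field_simp
  have final : m ^ ((1 - p) / p) * A + m ^ (1 / p) ≤ (m + p * A) ^ (1 / p) := by
    have : m ^ (1 / p) * (1 + A / m) = m ^ (1 / p) + m ^ ((1 - p) / p) * A := by
      rw [← hpow]; ring
    linarith [this ▸ hb2]
  linarith [hAp, final]
end

section
/- Let G be a connected graph with n vertices and let u∨G denote the join of a single new vertex u with G. Then A_p(u∨G)^p = Z_p(complement of G) + A_p(G)^p. -/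
open Finset

/-- The first general Zagreb index `Z_p(H) = ∑_{v∈V(H)} d(v)^p`. -/
noncomputable def Zp {W : Type*} [Fintype W] (H : SimpleGraph W) [DecidableRel H.Adj]
    (p : ℝ) : ℝ :=
  ∑ w : W, (H.degree w : ℝ) ^ p

/-- The join `u ∨ G`: a new vertex (`none`) adjacent to every vertex of `G`. -/
def cone {V : Type*} (G : SimpleGraph V) : SimpleGraph (Option V) where
  Adj x y :=
    (∃ v, x = none ∧ y = some v) ∨ (∃ v, x = some v ∧ y = none) ∨
    (∃ a b, x = some a ∧ y = some b ∧ G.Adj a b)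
  symm := by
    constructor
    rintro x y (⟨v, hx, hy⟩ | ⟨v, hx, hy⟩ | ⟨a, b, hx, hy, h⟩)
    · exact Or.inr (Or.inl ⟨v, hy, hx⟩)
    · exact Or.inl ⟨v, hy, hx⟩
    · exact Or.inr (Or.inr ⟨b, a, hy, hx, h.symm⟩)
  loopless := by
    constructor
    rintro x (⟨v, hx, hy⟩ | ⟨v, hx, hy⟩ | ⟨a, b, hx, hy, h⟩) <;> subst hx <;> simp_all

instance coneAdjDecidable {V : Type*} [Fintype V] [DecidableEq V]
    (G : SimpleGraph V) [DecidableRel G.Adj] : DecidableRel (cone G).Adj := fun x y => by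
  unfold cone
  infer_instance

/-!
Every vertex `v` of `G` gains exactly one new neighbour in `u ∨ G`, so the edges of `G` keep
their degree differences, while the new edge `uv` contributes
`|d(u) - (d_G(v) + 1)|^p = |n - 1 - d_G(v)|^p = d_{Gᶜ}(v)^p`.
Summing over `v` gives `Z_p(Gᶜ)` on top of `A_p(G)^p`.
-/

noncomputable def irregularitySum {W : Type*} [Fintype W] (H : SimpleGraph W)
    [DecidableRel H.Adj] (p : ℝ) : ℝ :=
  ∑ u : W, ∑ v ∈ H.neighborFinset u, |(H.degree u : ℝ) - (H.degree v : ℝ)| ^ p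

lemma irregularitySum_nonneg {W : Type*} [Fintype W] (H : SimpleGraph W) [DecidableRel H.Adj]
    (p : ℝ) : 0 ≤ irregularitySum H p :=
  sum_nonneg fun _ _ => sum_nonneg fun _ _ => Real.rpow_nonneg (abs_nonneg _) p

lemma Ap_rpow {W : Type*} [Fintype W] (H : SimpleGraph W) [DecidableRel H.Adj]
    {p : ℝ} (hp : p ≠ 0) : Ap H p ^ p = irregularitySum H p / 2 := by
  rw [Ap, ← irregularitySum,
    ← Real.rpow_mul (div_nonneg (irregularitySum_nonneg H p) zero_le_two),
    one_div_mul_cancel hp, Real.rpow_one]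

section Cone

variable {V : Type*} [Fintype V] [DecidableEq V] (G : SimpleGraph V) [DecidableRel G.Adj]

lemma cone_neighborFinset_none :
    (cone G).neighborFinset none = univ.image some := by
  ext y
  cases y <;> rw [SimpleGraph.mem_neighborFinset] <;> simp [cone]

lemma cone_neighborFinset_some (a : V) :
    (cone G).neighborFinset (some a) =
      insert none ((G.neighborFinset a).image some) := by
  ext y
  cases y <;> rw [SimpleGraph.mem_neighborFinset] <;> simp [cone]

lemma cone_degree_none : (cone G).degree none = Fintype.card V := by
  rw [← SimpleGraph.card_neighborFinset_eq_degree, cone_neighborFinset_none,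
    card_image_of_injective _ (Option.some_injective V), card_univ]

lemma cone_degree_some (a : V) : (cone G).degree (some a) = G.degree a + 1 := by
  rw [← SimpleGraph.card_neighborFinset_eq_degree, cone_neighborFinset_some,
    card_insert_of_notMem (by simp), card_image_of_injective _ (Option.some_injective V),
    SimpleGraph.card_neighborFinset_eq_degree]

lemma cone_degree_none_eq_add_degree_compl (a : V) :
    (cone G).degree none = (cone G).degree (some a) + Gᶜ.degree a := by
  have := G.degree_lt_card_verts a
  rw [cone_degree_none, cone_degree_some, SimpleGraph.degree_compl]
  omega

lemma abs_cone_degree_sub (a : V) :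
    |((cone G).degree none : ℝ) - (cone G).degree (some a)| = Gᶜ.degree a := by
  rw [cone_degree_none_eq_add_degree_compl G a, Nat.cast_add, add_sub_cancel_left, Nat.abs_cast]

lemma irregularitySum_cone (p : ℝ) :
    irregularitySum (cone G) p = 2 * Zp Gᶜ p + irregularitySum G p := by
  have hsome (a : V) :
      ∑ y ∈ (cone G).neighborFinset (some a),
          |((cone G).degree (some a) : ℝ) - (cone G).degree y| ^ p =
        (Gᶜ.degree a : ℝ) ^ p +
          ∑ b ∈ G.neighborFinset a, |(G.degree a : ℝ) - G.degree b| ^ p := by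
    rw [cone_neighborFinset_some, sum_insert (by simp), abs_sub_comm, abs_cone_degree_sub,
      sum_image fun _ _ _ _ => Option.some_inj.mp]
    simp only [cone_degree_some, Nat.cast_add_one, add_sub_add_right_eq_sub]
  rw [irregularitySum, Fintype.sum_option, cone_neighborFinset_none,
    sum_image fun _ _ _ _ => Option.some_inj.mp]
  simp only [abs_cone_degree_sub, hsome, sum_add_distrib]
  rw [Zp, irregularitySum]
  ring

end Cone

theorem stmt8_general {V : Type*} [Fintype V] [DecidableEq V]
    (G : SimpleGraph V) [DecidableRel G.Adj]
    (p : ℝ) (hp : 0 < p) :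
    Ap (cone G) p ^ p = Zp Gᶜ p + Ap G p ^ p := by
  rw [Ap_rpow _ hp.ne', Ap_rpow _ hp.ne', irregularitySum_cone]
  ring

theorem stmt8 {V : Type*} [Fintype V] [DecidableEq V]
    (G : SimpleGraph V) [DecidableRel G.Adj] (hG : G.Connected)
    (p : ℝ) (hp : 0 < p) :
    Ap (cone G) p ^ p = Zp Gᶜ p + Ap G p ^ p :=
  stmt8_general G p hp
end

section
/- For any tree T on n ≥ 3 vertices and positive real p, 2^(1/p) ≤ A_p(T) ≤ (n−2)·(n−1)^(1/p), where the lower bound holds with equality iff T is the path P_n and the upper bound with equality iff T is the star K_{1,n−1}. -/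
/-!
Write `S = ∑_u ∑_{v ~ u} |d(u) - d(v)|^p`, so that `A_p(T) = (S / 2)^(1/p)`.

Lower bound: for `n ≥ 3` no two leaves are adjacent, so every ordered edge `(u, v)` contributes at
least `[u is a leaf] + [v is a leaf]`, and `S ≥ 2L` where `L` is the number of leaves. The degree
sum `2(n - 1)` of a tree gives `L = 2 + ∑_v max(d(v) - 2, 0) ≥ 2`, and `S = 4` forces maximum
degree two, i.e. a path: the distance from a leaf is then a bijection onto `{0, …, n - 1}`.

Upper bound: all degrees lie in `[1, n - 1]`, so each of the `2(n - 1)` terms of `S` is at most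
`(n - 2)^p`, with equality iff every edge joins a vertex of degree `n - 1` to a leaf, i.e. `T` is a
star.
-/

open Finset

namespace SimpleGraph

variable {V : Type*}

lemma Connected.exists_adj_dist_add_one {G : SimpleGraph V} (hG : G.Connected) {a v : V}
    (hv : v ≠ a) : ∃ w, G.Adj w v ∧ G.dist a w + 1 = G.dist a v := by
  obtain ⟨p, hp⟩ := hG.exists_walk_length_eq_dist v a
  cases p with
  | nil => exact absurd rfl hv
  | @cons _ w _ h q =>
    refine ⟨w, h.symm, ?_⟩
    have hle : G.dist w a ≤ q.length := dist_le q
    have hge : G.dist v a ≤ G.dist v w + G.dist w a := hG.dist_triangle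
    rw [dist_eq_one_iff_adj.2 h] at hge
    rw [Walk.length_cons] at hp
    rw [dist_comm, dist_comm (u := a)]
    omega

variable [Fintype V]

section Degree

variable {G : SimpleGraph V} [DecidableRel G.Adj]

lemma eq_of_adj_of_degree_eq_one {u v w : V} (hu : G.degree u = 1) (hv : G.Adj u v)
    (hw : G.Adj u w) : v = w :=
  (degree_eq_one_iff_existsUnique_adj.1 hu).unique hv hw

lemma three_le_degree {v x y z : V} (hx : G.Adj v x) (hy : G.Adj v y) (hz : G.Adj v z)
    (hxy : x ≠ y) (hxz : x ≠ z) (hyz : y ≠ z) : 3 ≤ G.degree v := by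
  classical
  rw [← card_neighborFinset_eq_degree,
    show 3 = #{x, y, z} by rw [card_insert_of_notMem (by simp [*]), card_pair hyz]]
  exact card_le_card fun w ↦ by aesop

lemma Preconnected.abs_sub_degree_le [Nontrivial V] (hG : G.Preconnected) (u v : V) :
    |(G.degree u : ℝ) - G.degree v| ≤ Fintype.card V - 2 := by
  have hu : (1 : ℝ) ≤ G.degree u := by exact_mod_cast hG.degree_pos_of_nontrivial u
  have hv : (1 : ℝ) ≤ G.degree v := by exact_mod_cast hG.degree_pos_of_nontrivial v
  have hu' : (G.degree u : ℝ) + 1 ≤ Fintype.card V := by exact_mod_cast G.degree_lt_card_verts u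
  have hv' : (G.degree v : ℝ) + 1 ≤ Fintype.card V := by exact_mod_cast G.degree_lt_card_verts v
  rw [abs_sub_le_iff]
  constructor <;> linarith

lemma Connected.two_le_degree_of_adj_of_degree_eq_one (hG : G.Connected)
    (hn : 3 ≤ Fintype.card V) {u v : V} (huv : G.Adj u v) (hu : G.degree u = 1) :
    2 ≤ G.degree v := by
  classical
  obtain ⟨w, hw⟩ : ((univ.erase u).erase v).Nonempty := by
    rw [← card_pos]
    have := pred_card_le_card_erase (s := univ.erase u) (a := v)
    have := pred_card_le_card_erase (s := (univ : Finset V)) (a := u)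
    rw [card_univ] at this
    omega
  simp only [mem_erase, mem_univ, and_true] at hw
  obtain ⟨hwv, hwu⟩ := hw
  -- a path from the leaf `u` to a third vertex `w` leaves `v` through a neighbour other than `u`
  obtain ⟨p, hp⟩ := hG.exists_isPath u w
  cases p with
  | nil => exact absurd rfl hwu
  | cons h₁ q =>
    obtain rfl := eq_of_adj_of_degree_eq_one hu h₁ huv
    cases q with
    | nil => exact absurd rfl hwv
    | @cons _ x _ h₂ r =>
      have hxu : x ≠ u := by
        rintro rfl
        simp only [Walk.cons_isPath_iff, Walk.support_cons] at hp
        exact hp.2 (List.mem_cons_of_mem _ r.start_mem_support)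
      rw [← card_neighborFinset_eq_degree]
      exact one_lt_card.2 ⟨u, by simpa using huv.symm, x, by simpa using h₂, hxu.symm⟩

lemma Connected.dist_injective (hG : G.Connected) (hdeg : ∀ v, G.degree v ≤ 2) {a : V}
    (ha : G.degree a = 1) : Function.Injective (G.dist a) := by
  suffices ∀ k u v, G.dist a u = k → G.dist a v = k → u = v from
    fun u v h ↦ this _ u v h rfl
  intro k
  induction k with
  | zero =>
    intro u v hu hv
    rw [hG.dist_eq_zero_iff] at hu hv
    rw [← hu, ← hv]
  | succ k ih =>
    intro u v hu hv
    by_contra huv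
    have hua : u ≠ a := by rintro rfl; simp at hu
    have hva : v ≠ a := by rintro rfl; simp at hv
    obtain ⟨w, hwu, hwdu⟩ := hG.exists_adj_dist_add_one hua
    obtain ⟨w', hwv, hwdv⟩ := hG.exists_adj_dist_add_one hva
    obtain rfl : w = w' := ih w w' (by omega) (by omega)
    -- the common predecessor `w` of `u ≠ v` would be the leaf `a` or have a third neighbour
    by_cases hwa : w = a
    · exact huv (eq_of_adj_of_degree_eq_one ha (hwa ▸ hwu) (hwa ▸ hwv))
    · obtain ⟨z, hzw, hzd⟩ := hG.exists_adj_dist_add_one hwa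
      have := three_le_degree hzw.symm hwu hwv (by rintro rfl; omega) (by rintro rfl; omega) huv
      have := hdeg w
      omega

lemma Connected.nonempty_iso_pathGraph (hG : G.Connected) (hdeg : ∀ v, G.degree v ≤ 2) {a : V}
    (ha : G.degree a = 1) : Nonempty (G ≃g pathGraph (Fintype.card V)) := by
  have hinj := hG.dist_injective hdeg ha
  have hlt (v : V) : G.dist a v < Fintype.card V := by
    obtain ⟨p, hp, hl⟩ := hG.exists_path_of_dist a v
    exact hl ▸ hp.length_lt
  let f : V → Fin (Fintype.card V) := fun v ↦ ⟨G.dist a v, hlt v⟩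
  have hf : Function.Bijective f := (Fintype.bijective_iff_injective_and_card f).2
    ⟨fun u v h ↦ hinj (Fin.val_eq_of_eq h), by simp⟩
  refine ⟨⟨Equiv.ofBijective f hf, fun {u v} ↦ ?_⟩⟩
  simp only [Equiv.ofBijective_apply, pathGraph_adj, f]
  constructor
  · have parent {x y : V} (h : G.dist a x + 1 = G.dist a y) : G.Adj x y := by
      have hya : y ≠ a := by rintro rfl; simp at h
      obtain ⟨w, hw, hwd⟩ := hG.exists_adj_dist_add_one hya
      exact hinj (by omega : G.dist a w = G.dist a x) ▸ hw
    rintro (h | h)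
    exacts [parent h, (parent h).symm]
  · intro h
    have hne : G.dist a u ≠ G.dist a v := fun h' ↦ h.ne (hinj h')
    rcases h.diff_dist_adj (u := a) with h' | h' | h' <;> omega

lemma Iso.degree_le_two {n : ℕ} (e : G ≃g pathGraph n) (v : V) : G.degree v ≤ 2 := by
  rw [← card_neighborFinset_eq_degree]
  -- a neighbour `w` of `v` is determined by whether `e w` lies above or below `e v`
  calc #(G.neighborFinset v) ≤ #(univ : Finset Bool) :=
        card_le_card_of_injOn (fun w ↦ decide ((e v).val + 1 = (e w).val))
          (fun _ _ ↦ mem_univ _) fun w hw x hx h ↦ by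
            simp only [coe_neighborFinset, mem_neighborSet] at hw hx
            rw [← e.map_rel_iff, pathGraph_adj] at hw hx
            simp only [decide_eq_decide] at h
            exact e.injective (Fin.ext (by omega))
    _ = 2 := rfl

end Degree

section NeighborSums

variable (G : SimpleGraph V) [DecidableRel G.Adj] {M : Type*} [AddCommMonoid M]

lemma sum_sum_neighborFinset_comm (f : V → V → M) :
    ∑ u, ∑ v ∈ G.neighborFinset u, f u v = ∑ u, ∑ v ∈ G.neighborFinset u, f v u := by
  simp only [neighborFinset_eq_filter, sum_filter]
  rw [sum_comm]
  simp only [adj_comm]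

lemma sum_sum_neighborFinset_left (g : V → M) :
    ∑ u, ∑ _v ∈ G.neighborFinset u, g u = ∑ u, G.degree u • g u := by
  simp only [sum_const, card_neighborFinset_eq_degree]

lemma sum_sum_neighborFinset_eq_iff_of_le {f g : V → V → ℝ}
    (h : ∀ u v, G.Adj u v → f u v ≤ g u v) :
    ∑ u, ∑ v ∈ G.neighborFinset u, f u v = ∑ u, ∑ v ∈ G.neighborFinset u, g u v ↔
      ∀ u v, G.Adj u v → f u v = g u v := by
  rw [sum_eq_sum_iff_of_le fun u _ ↦ sum_le_sum fun v hv ↦ h u v ((mem_neighborFinset ..).1 hv)]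
  refine forall_congr' fun u ↦ ?_
  rw [sum_eq_sum_iff_of_le fun v hv ↦ h u v ((mem_neighborFinset ..).1 hv)]
  simp

end NeighborSums

section Leaves

def leaves (G : SimpleGraph V) [DecidableRel G.Adj] : Finset V := {v | G.degree v = 1}

lemma sum_sum_neighborFinset_leaf_indicator (G : SimpleGraph V) [DecidableRel G.Adj] :
    ∑ u, ∑ v ∈ G.neighborFinset u,
      ((if G.degree u = 1 then 1 else 0) + (if G.degree v = 1 then 1 else 0) : ℝ)
      = 2 * #G.leaves := by
  have h : ∑ u, ∑ _v ∈ G.neighborFinset u, (if G.degree u = 1 then 1 else 0 : ℝ) = #G.leaves := by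
    rw [sum_sum_neighborFinset_left, leaves, card_filter, Nat.cast_sum]
    refine sum_congr rfl fun u _ ↦ ?_
    split_ifs with hu <;> simp [hu]
  have h' := h
  rw [sum_sum_neighborFinset_comm] at h'
  simp only [sum_add_distrib, h, h']
  ring

variable {T : SimpleGraph V} [DecidableRel T.Adj]

lemma IsTree.sum_degrees (hT : T.IsTree) : ∑ v, T.degree v = 2 * (Fintype.card V - 1) := by
  classical
  rw [sum_degrees_eq_twice_card_edges, ← hT.card_edgeFinset]
  simp

lemma IsTree.sum_sum_neighborFinset_const (hT : T.IsTree) (c : ℝ) :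
    ∑ u, ∑ _v ∈ T.neighborFinset u, c = 2 * ((Fintype.card V : ℝ) - 1) * c := by
  have := Fintype.card_pos_iff.2 hT.nonempty
  rw [sum_sum_neighborFinset_left, ← sum_smul, hT.sum_degrees, nsmul_eq_mul]
  push_cast [Nat.one_le_iff_ne_zero.2 this.ne']
  ring

lemma IsTree.card_leaves_eq [Nontrivial V] (hT : T.IsTree) :
    (#T.leaves : ℤ) = 2 + ∑ v, max ((T.degree v : ℤ) - 2) 0 := by
  have hsum : ∑ v, (T.degree v : ℤ) = 2 * Fintype.card V - 2 := by
    have := Fintype.card_pos (α := V)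
    rw [← Nat.cast_sum, hT.sum_degrees]
    push_cast [Nat.one_le_iff_ne_zero.2 this.ne']
    ring
  have hleaf (v : V) : (if T.degree v = 1 then 1 else 0 : ℤ)
      = 2 - T.degree v + max ((T.degree v : ℤ) - 2) 0 := by
    have := hT.connected.preconnected.degree_pos_of_nontrivial v
    split_ifs with h
    · simp [h]
    · rw [max_eq_left (by omega)]
      ring
  rw [leaves, card_filter, Nat.cast_sum]
  push_cast
  simp_rw [hleaf, sum_add_distrib, sum_sub_distrib, hsum, sum_const, card_univ, nsmul_eq_mul]
  ring

lemma IsTree.two_le_card_leaves [Nontrivial V] (hT : T.IsTree) : 2 ≤ #T.leaves := by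
  have := hT.card_leaves_eq
  have : 0 ≤ ∑ v, max ((T.degree v : ℤ) - 2) 0 := sum_nonneg fun v _ ↦ le_max_right _ _
  omega

lemma IsTree.card_leaves_eq_two_iff [Nontrivial V] (hT : T.IsTree) :
    #T.leaves = 2 ↔ ∀ v, T.degree v ≤ 2 := by
  have hnonneg : ∀ v ∈ univ, 0 ≤ max ((T.degree v : ℤ) - 2) 0 := fun v _ ↦ le_max_right _ _
  rw [← Nat.cast_inj (R := ℤ), hT.card_leaves_eq, Nat.cast_two, add_eq_left,
    sum_eq_zero_iff_of_nonneg hnonneg]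
  simp only [mem_univ, true_implies, max_eq_right_iff, tsub_nonpos]
  exact forall_congr' fun v ↦ by omega

lemma IsTree.nonempty_iso_pathGraph_iff [Nontrivial V] (hT : T.IsTree) :
    Nonempty (T ≃g pathGraph (Fintype.card V)) ↔ ∀ v, T.degree v ≤ 2 := by
  refine ⟨fun ⟨e⟩ ↦ e.degree_le_two, fun hdeg ↦ ?_⟩
  obtain ⟨a, ha⟩ := hT.exists_vert_degree_one_of_nontrivial
  exact hT.connected.nonempty_iso_pathGraph hdeg ha

lemma IsTree.degree_eq_one_of_isUniversal [Nontrivial V] (hT : T.IsTree) {c : V}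
    (hc : T.IsUniversal c) {w : V} (hw : w ≠ c) : T.degree w = 1 := by
  classical
  have hsum : ∑ v ∈ univ.erase c, 1 = ∑ v ∈ univ.erase c, T.degree v := by
    have := hT.sum_degrees
    rw [← add_sum_erase _ _ (mem_univ c), (degree_eq_card_sub_one T c).2 hc] at this
    rw [sum_const, card_erase_of_mem (mem_univ c), card_univ, smul_eq_mul, mul_one]
    have := Fintype.one_lt_card (α := V)
    omega
  rw [sum_eq_sum_iff_of_le fun v _ ↦ hT.connected.preconnected.degree_pos_of_nontrivial v] at hsum
  exact (hsum w (by simp [hw])).symm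

end Leaves

lemma leaf_indicator_add_le_abs_sub_rpow {a b : ℕ} (ha : a = 1 → 2 ≤ b) (hb : b = 1 → 2 ≤ a)
    {p : ℝ} (hp : 0 < p) :
    ((if a = 1 then 1 else 0) + (if b = 1 then 1 else 0) : ℝ) ≤ |(a : ℝ) - b| ^ p := by
  have key {x y : ℕ} (hx : x = 1) (hy : 2 ≤ y) : (1 : ℝ) ≤ |(x : ℝ) - y| ^ p := by
    have hy' : (2 : ℝ) ≤ y := by exact_mod_cast hy
    refine Real.one_le_rpow ?_ hp.le
    rw [abs_sub_comm, hx, Nat.cast_one, abs_of_nonneg] <;> linarith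
  by_cases ha1 : a = 1
  · rw [if_pos ha1, if_neg (by have := ha ha1; omega), add_zero]
    exact key ha1 (ha ha1)
  · by_cases hb1 : b = 1
    · rw [if_neg ha1, if_pos hb1, zero_add, abs_sub_comm]
      exact key hb1 (hb hb1)
    · simp only [if_neg ha1, if_neg hb1, add_zero]
      positivity

lemma abs_sub_rpow_eq_leaf_indicator_add {a b : ℕ} (ha : a = 1 ∨ a = 2) (hb : b = 1 ∨ b = 2)
    (hab : ¬(a = 1 ∧ b = 1)) {p : ℝ} (hp : 0 < p) :
    |(a : ℝ) - b| ^ p = ((if a = 1 then 1 else 0) + (if b = 1 then 1 else 0) : ℝ) := by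
  rcases ha with rfl | rfl <;> rcases hb with rfl | rfl <;> norm_num [Real.zero_rpow hp.ne'] at *

/-- Twice the `p`-th power of the Albertson index: every edge is counted from both ends. -/
noncomputable def irregularitySum (G : SimpleGraph V) [DecidableRel G.Adj] (p : ℝ) : ℝ :=
  ∑ u, ∑ v ∈ G.neighborFinset u, |(G.degree u : ℝ) - G.degree v| ^ p

section Irregularity

variable {T : SimpleGraph V} [DecidableRel T.Adj] {p : ℝ}

lemma IsTree.two_mul_card_leaves_le_irregularitySum (hT : T.IsTree) (hp : 0 < p)
    (hn : 3 ≤ Fintype.card V) : 2 * (#T.leaves : ℝ) ≤ T.irregularitySum p := by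
  rw [← sum_sum_neighborFinset_leaf_indicator, irregularitySum]
  gcongr with u _ v hv
  rw [mem_neighborFinset] at hv
  exact leaf_indicator_add_le_abs_sub_rpow
    (hT.connected.two_le_degree_of_adj_of_degree_eq_one hn hv)
    (hT.connected.two_le_degree_of_adj_of_degree_eq_one hn hv.symm) hp

lemma IsTree.irregularitySum_eq_of_degree_le_two (hT : T.IsTree) (hp : 0 < p)
    (hn : 3 ≤ Fintype.card V) (hdeg : ∀ v, T.degree v ≤ 2) :
    T.irregularitySum p = 2 * #T.leaves := by
  have : Nontrivial V := Fintype.one_lt_card_iff_nontrivial.1 (by omega)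
  rw [← sum_sum_neighborFinset_leaf_indicator, irregularitySum]
  refine sum_congr rfl fun u _ ↦ sum_congr rfl fun v hv ↦ ?_
  rw [mem_neighborFinset] at hv
  have hpos (w : V) := hT.connected.preconnected.degree_pos_of_nontrivial w
  have := hT.connected.two_le_degree_of_adj_of_degree_eq_one hn hv
  have := hpos u; have := hpos v; have := hdeg u; have := hdeg v
  exact abs_sub_rpow_eq_leaf_indicator_add (by omega) (by omega) (by omega) hp

lemma IsTree.four_le_irregularitySum (hT : T.IsTree) (hp : 0 < p) (hn : 3 ≤ Fintype.card V) :
    4 ≤ T.irregularitySum p := by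
  have : Nontrivial V := Fintype.one_lt_card_iff_nontrivial.1 (by omega)
  have : (2 : ℝ) ≤ #T.leaves := by exact_mod_cast hT.two_le_card_leaves
  linarith [hT.two_mul_card_leaves_le_irregularitySum hp hn]

lemma IsTree.irregularitySum_eq_four_iff (hT : T.IsTree) (hp : 0 < p) (hn : 3 ≤ Fintype.card V) :
    T.irregularitySum p = 4 ↔ ∀ v, T.degree v ≤ 2 := by
  have : Nontrivial V := Fintype.one_lt_card_iff_nontrivial.1 (by omega)
  refine ⟨fun h ↦ hT.card_leaves_eq_two_iff.1 ?_, fun hdeg ↦ ?_⟩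
  · have := hT.two_mul_card_leaves_le_irregularitySum hp hn
    have : (#T.leaves : ℝ) ≤ 2 := by linarith
    exact le_antisymm (by exact_mod_cast this) hT.two_le_card_leaves
  · rw [hT.irregularitySum_eq_of_degree_le_two hp hn hdeg, hT.card_leaves_eq_two_iff.2 hdeg]
    norm_num

lemma IsTree.irregularitySum_le [Nontrivial V] (hT : T.IsTree) (hp : 0 < p) :
    T.irregularitySum p ≤ 2 * ((Fintype.card V : ℝ) - 1) * ((Fintype.card V : ℝ) - 2) ^ p := by
  rw [← hT.sum_sum_neighborFinset_const, irregularitySum]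
  gcongr
  exact hT.connected.preconnected.abs_sub_degree_le _ _

lemma IsTree.irregularitySum_eq_iff [Nontrivial V] (hT : T.IsTree) (hp : 0 < p) :
    T.irregularitySum p = 2 * ((Fintype.card V : ℝ) - 1) * ((Fintype.card V : ℝ) - 2) ^ p ↔
      ∃ c, T.IsUniversal c := by
  have hn : (2 : ℝ) ≤ Fintype.card V := by exact_mod_cast Fintype.one_lt_card (α := V)
  have hdeg (u : V) : (1 : ℝ) ≤ T.degree u ∧ (T.degree u : ℝ) + 1 ≤ Fintype.card V :=
    ⟨by exact_mod_cast hT.connected.preconnected.degree_pos_of_nontrivial u,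
      by exact_mod_cast T.degree_lt_card_verts u⟩
  have hinj (u v : V) : |(T.degree u : ℝ) - T.degree v| ^ p = ((Fintype.card V : ℝ) - 2) ^ p ↔
      |(T.degree u : ℝ) - T.degree v| = Fintype.card V - 2 :=
    Real.rpow_left_inj (abs_nonneg _) (by linarith) hp.ne'
  have universal {c : V} (hc : (T.degree c : ℝ) + 1 = Fintype.card V) : T.IsUniversal c := by
    rw [← degree_eq_card_sub_one]
    have : T.degree c + 1 = Fintype.card V := by exact_mod_cast hc
    omega
  rw [← hT.sum_sum_neighborFinset_const, irregularitySum, sum_sum_neighborFinset_eq_iff_of_le _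
    fun u v _ ↦ Real.rpow_le_rpow (abs_nonneg _) (hT.connected.preconnected.abs_sub_degree_le u v)
      hp.le]
  simp_rw [hinj]
  constructor
  · intro h
    obtain ⟨u, v, huv⟩ : ∃ u v, T.Adj u v := by
      obtain ⟨u⟩ := hT.nonempty
      exact ⟨u, (degree_pos_iff_exists_adj T u).1
        (hT.connected.preconnected.degree_pos_of_nontrivial u)⟩
    obtain ⟨hu, hu'⟩ := hdeg u
    obtain ⟨hv, hv'⟩ := hdeg v
    rcases (abs_eq (by linarith)).1 (h u v huv) with h' | h'
    exacts [⟨u, universal (by linarith)⟩, ⟨v, universal (by linarith)⟩]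
  · rintro ⟨c, hc⟩ u v huv
    have hdc : (T.degree c : ℝ) = Fintype.card V - 1 := by
      rw [(degree_eq_card_sub_one T c).2 hc, Nat.cast_sub Fintype.card_pos, Nat.cast_one]
    have hleaf {w : V} (hw : w ≠ c) : (T.degree w : ℝ) = 1 := by
      exact_mod_cast hT.degree_eq_one_of_isUniversal hc hw
    by_cases hu : u = c
    · subst hu
      rw [hdc, hleaf huv.ne.symm, abs_of_nonneg (by linarith)]
      ring
    · obtain rfl : c = v := eq_of_adj_of_degree_eq_one
        (hT.degree_eq_one_of_isUniversal hc hu) (hc (Ne.symm hu)).symm huv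
      rw [hdc, hleaf hu, abs_sub_comm, abs_of_nonneg (by linarith)]
      ring

end Irregularity

end SimpleGraph

theorem stmt14_general {V : Type*} [Fintype V]
    (T : SimpleGraph V) [DecidableRel T.Adj] (hT : T.IsTree)
    (hn : 3 ≤ Fintype.card V) (p : ℝ) (hp : 0 < p) :
    ((2 : ℝ) ^ (1 / p) ≤ Ap T p ∧ Ap T p ≤ ((Fintype.card V : ℝ) - 2) * ((Fintype.card V : ℝ) - 1) ^ (1 / p)) ∧
    (Ap T p = (2 : ℝ) ^ (1 / p) ↔ Nonempty (T ≃g SimpleGraph.pathGraph (Fintype.card V))) ∧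
    (Ap T p = ((Fintype.card V : ℝ) - 2) * ((Fintype.card V : ℝ) - 1) ^ (1 / p) ↔
      -- T is the star K_{1, n-1}
      ∃ c : V, ∀ w : V, w ≠ c → T.Adj c w) := by
  have : Nontrivial V := Fintype.one_lt_card_iff_nontrivial.1 (by omega)
  have hn' : (3 : ℝ) ≤ Fintype.card V := by exact_mod_cast hn
  have hp' : 0 < 1 / p := one_div_pos.2 hp
  set M := 2 * ((Fintype.card V : ℝ) - 1) * ((Fintype.card V : ℝ) - 2) ^ p
  have hlow : (2 : ℝ) ^ (1 / p) = (4 / 2) ^ (1 / p) := by norm_num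
  have hup : ((Fintype.card V : ℝ) - 2) * ((Fintype.card V : ℝ) - 1) ^ (1 / p)
      = (M / 2) ^ (1 / p) := by
    rw [show M / 2 = ((Fintype.card V : ℝ) - 1) * ((Fintype.card V : ℝ) - 2) ^ p by ring,
      Real.mul_rpow (by linarith) (Real.rpow_nonneg (by linarith) p), one_div,
      Real.rpow_rpow_inv (by linarith) hp.ne', mul_comm]
  have h4 := hT.four_le_irregularitySum hp hn
  have hM := hT.irregularitySum_le hp
  have hS : 0 ≤ T.irregularitySum p / 2 := by linarith
  have hM0 : 0 ≤ M / 2 := by linarith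
  rw [show Ap T p = (T.irregularitySum p / 2) ^ (1 / p) from rfl, hlow, hup,
    Real.rpow_le_rpow_iff (by norm_num) hS hp', Real.rpow_le_rpow_iff hS hM0 hp',
    Real.rpow_left_inj hS (by norm_num) hp'.ne', Real.rpow_left_inj hS hM0 hp'.ne',
    div_left_inj' two_ne_zero, div_left_inj' two_ne_zero, hT.irregularitySum_eq_four_iff hp hn,
    hT.nonempty_iso_pathGraph_iff, hT.irregularitySum_eq_iff hp]
  exact ⟨⟨by linarith, by linarith⟩, Iff.rfl,
    exists_congr fun c ↦ ⟨fun h w hw ↦ h hw.symm, fun h _ hw ↦ h _ hw.symm⟩⟩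

theorem stmt14 {V : Type*} [Fintype V] [DecidableEq V]
    (T : SimpleGraph V) [DecidableRel T.Adj] (hT : T.IsTree)
    (hn : 3 ≤ Fintype.card V) (p : ℝ) (hp : 0 < p) :
    ((2 : ℝ) ^ (1 / p) ≤ Ap T p ∧ Ap T p ≤ ((Fintype.card V : ℝ) - 2) * ((Fintype.card V : ℝ) - 1) ^ (1 / p)) ∧
    (Ap T p = (2 : ℝ) ^ (1 / p) ↔ Nonempty (T ≃g SimpleGraph.pathGraph (Fintype.card V))) ∧
    (Ap T p = ((Fintype.card V : ℝ) - 2) * ((Fintype.card V : ℝ) - 1) ^ (1 / p) ↔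
      -- T is the star K_{1, n-1}
      ∃ c : V, ∀ w : V, w ≠ c → T.Adj c w) :=
  stmt14_general T hT hn p hp
end

section
/- For any tree T on n vertices with maximum degree Δ and p ≥ 1, A_p(T) ≥ (Δ · ε(v_Δ)^(1−p))^(1/p) · (Δ − 1), where v_Δ is a vertex of maximum degree and ε(v_Δ) its eccentricity. -/
/-!
Let `r` be a vertex of degree `Δ`. For each neighbour `u` of `r`, a vertex of the branch at `u`
farthest from `r` is a leaf, so the degree drops by at least `Δ - 1` along the geodesic
from `r` through `u` to it. The triangle inequality and the power-mean inequality turn this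
into `(Δ - 1)^p ℓ^(1-p) ≤ ∑ |d(x) - d(y)|^p` over the `ℓ ≤ ε(r)` edges of that geodesic.
The `Δ` geodesics are edge-disjoint, hence `Δ (Δ - 1)^p ε(r)^(1-p) ≤ A_p(T)^p`.
-/

open Finset

/-- The eccentricity of a vertex: the maximum distance from it to any vertex. -/
noncomputable def ecc {V : Type*} [Fintype V] (G : SimpleGraph V) (v : V) : ℕ :=
  Finset.univ.sup fun w => G.dist v w

namespace SimpleGraph

variable {V : Type*} {G : SimpleGraph V} {a b : V}

namespace Walk

theorem dist_fst_add_one_of_mem_darts {P : G.Walk a b} (hP : P.length = G.dist a b)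
    {d : G.Dart} (hd : d ∈ P.darts) : G.dist a d.fst + 1 = G.dist a d.snd := by
  obtain ⟨R₁, R₂, rfl⟩ := (isSubwalk_toWalk_adj_iff_mem_darts P).2 hd
  have h₁ := length_eq_dist_of_subwalk hP
    (⟨nil, d.adj.toWalk.append R₂, by rw [nil_append, append_assoc]⟩ : R₁.IsSubwalk _)
  have h₂ := length_eq_dist_of_subwalk hP
    (⟨nil, R₂, by simp⟩ : (R₁.append d.adj.toWalk).IsSubwalk _)
  simp only [length_append, Adj.toWalk, length_cons, length_nil] at h₁ h₂
  omega

theorem dist_add_one_of_mem_support_of_cons {u : V} (h : G.Adj a u) {R : G.Walk u b}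
    (hP : (R.cons h).length = G.dist a b) {y : V} (hy : y ∈ R.support) :
    G.dist u y + 1 = G.dist a y := by
  classical
  have h₁ := length_eq_dist_of_subwalk hP ((R.isSubwalk_takeUntil hy).cons h)
  have h₂ := length_eq_dist_of_subwalk hP
    (⟨nil, R.dropUntil y hy, by rw [nil_append, cons_append, R.take_spec hy]⟩ :
      ((R.takeUntil y hy).cons h).IsSubwalk _)
  simp only [length_cons] at h₂
  omega

theorem abs_sub_le_sum_darts (P : G.Walk a b) (f : V → ℝ) :
    |f a - f b| ≤ (P.darts.map fun d => |f d.fst - f d.snd|).sum := by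
  induction P with
  | nil => simp
  | cons h q ih =>
    simp only [darts_cons, List.map_cons, List.sum_cons]
    exact (abs_sub_le _ _ _).trans (add_le_add_right ih _)

theorem abs_sub_rpow_mul_length_rpow_le [DecidableEq V] {P : G.Walk a b} (hP : P.IsPath)
    (f : V → ℝ) {p : ℝ} (hp : 1 ≤ p) :
    |f a - f b| ^ p * (P.length : ℝ) ^ (1 - p) ≤
      ∑ d ∈ P.darts.toFinset, |f d.fst - f d.snd| ^ p := by
  have hnodup := darts_nodup_of_support_nodup hP.support_nodup
  rcases P.length.eq_zero_or_pos with hlen | hlen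
  · obtain rfl := eq_of_length_eq_zero hlen
    rw [sub_self, abs_zero, Real.zero_rpow (by linarith), zero_mul]
    exact sum_nonneg fun _ _ => by positivity
  have hcard : (#P.darts.toFinset : ℝ) = P.length := by
    rw [List.toFinset_card_of_nodup hnodup, length_darts]
  have hpow := Real.rpow_sum_le_const_mul_sum_rpow_of_nonneg (s := P.darts.toFinset)
    (f := fun d => |f d.fst - f d.snd|) hp fun _ _ => abs_nonneg _
  rw [hcard, List.sum_toFinset _ hnodup] at hpow
  have htel := Real.rpow_le_rpow (abs_nonneg _) (P.abs_sub_le_sum_darts f) (by linarith : 0 ≤ p)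
  have hlen' : (0 : ℝ) < P.length := by exact_mod_cast hlen
  calc |f a - f b| ^ p * (P.length : ℝ) ^ (1 - p)
      ≤ (P.length : ℝ) ^ (p - 1) * (∑ d ∈ P.darts.toFinset, |f d.fst - f d.snd| ^ p) *
          (P.length : ℝ) ^ (1 - p) := by
        gcongr
        exact htel.trans hpow
    _ = ∑ d ∈ P.darts.toFinset, |f d.fst - f d.snd| ^ p := by
        rw [mul_comm _ (∑ _ ∈ _, _), mul_assoc, ← Real.rpow_add hlen']
        simp

end Walk

section Darts

variable [Fintype V] [DecidableRel G.Adj]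

theorem sum_neighborFinset_eq_sum_darts {M : Type*} [AddCommMonoid M] (F : V → V → M) :
    ∑ u, ∑ v ∈ G.neighborFinset u, F u v = ∑ d : G.Dart, F d.fst d.snd := by
  rw [sum_sigma']
  exact sum_bij' (fun x hx => ⟨(x.1, x.2), by simpa using hx⟩) (fun d _ => ⟨d.fst, d.snd⟩)
    (fun _ _ => mem_univ _) (fun d _ => by simp [d.adj])
    (fun _ _ => rfl) (fun _ _ => rfl) (fun _ _ => rfl)

theorem two_mul_sum_le_sum_darts {s : Finset G.Dart} (hs : ∀ d ∈ s, d.symm ∉ s)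
    {g : G.Dart → ℝ} (hg₀ : ∀ d, 0 ≤ g d) (hg : ∀ d, g d.symm = g d) :
    2 * ∑ d ∈ s, g d ≤ ∑ d, g d := by
  classical
  have hdisj : Disjoint s (s.image Dart.symm) := by
    simp only [Finset.disjoint_left, mem_image]
    rintro _ hd ⟨d, hd', rfl⟩
    exact hs d hd' hd
  have hsymm : ∑ d ∈ s.image Dart.symm, g d = ∑ d ∈ s, g d := by
    rw [sum_image fun _ _ _ _ h => Dart.symm_involutive.injective h]
    exact sum_congr rfl fun d _ => hg d
  calc 2 * ∑ d ∈ s, g d = ∑ d ∈ s ∪ s.image Dart.symm, g d := by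
        rw [sum_union hdisj, hsymm, two_mul]
    _ ≤ ∑ d, g d := sum_le_univ_sum_of_nonneg hg₀

end Darts

namespace IsTree

variable (hT : G.IsTree)
include hT

/- For `G.Adj r u`, the condition `G.dist u w + 1 = G.dist r w` says that `w` lies in the branch
of the tree at `u`, seen from `r`. -/
theorem eq_of_adj_of_dist_add_one {r u u' w : V} (hu : G.Adj r u) (hu' : G.Adj r u')
    (h : G.dist u w + 1 = G.dist r w) (h' : G.dist u' w + 1 = G.dist r w) : u = u' := by
  obtain ⟨R, hR⟩ := hT.connected.exists_walk_length_eq_dist u w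
  obtain ⟨R', hR'⟩ := hT.connected.exists_walk_length_eq_dist u' w
  have hP : (R.cons hu).length = G.dist r w := by rw [Walk.length_cons, hR, h]
  have hP' : (R'.cons hu').length = G.dist r w := by rw [Walk.length_cons, hR', h']
  have := (hT.existsUnique_path r w).unique (Walk.isPath_of_length_eq_dist _ hP)
    (Walk.isPath_of_length_eq_dist _ hP')
  simpa using congrArg Walk.snd this

theorem degree_le_one_of_forall_dist_le {r u l : V} [Fintype (G.neighborSet l)]
    (hu : G.Adj r u) (hmax : ∀ w, G.dist u w + 1 = G.dist r w → G.dist r w ≤ G.dist r l)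
    (hl : G.dist u l + 1 = G.dist r l) : G.degree l ≤ 1 := by
  -- a neighbour of `l` farther from `r` would lie in the branch, beyond `l`
  have hparent : ∀ y, G.Adj l y → G.dist y r + 1 = G.dist l r := by
    intro y hy
    rw [dist_comm (u := y), dist_comm (u := l)]
    refine ((hT.dist_eq_dist_add_one_of_adj r hy).resolve_right fun hfar => ?_).symm
    have hru : G.dist r u = 1 := dist_eq_one_iff_adj.2 hu
    have h₁ := hT.connected.dist_triangle (u := u) (v := l) (w := y)
    have h₂ := hT.connected.dist_triangle (u := r) (v := u) (w := y)
    have := hmax y (by rw [dist_eq_one_iff_adj.2 hy] at h₁; omega)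
    omega
  rw [← card_neighborFinset_eq_degree, Finset.card_le_one]
  intro y hy y' hy'
  rw [mem_neighborFinset] at hy hy'
  exact hT.eq_of_adj_of_dist_add_one hy hy' (hparent y hy) (hparent y' hy')

theorem exists_degree_le_one_of_adj [Fintype V] [DecidableRel G.Adj] {r u : V}
    (hu : G.Adj r u) : ∃ l, G.dist u l + 1 = G.dist r l ∧ G.degree l ≤ 1 := by
  classical
  obtain ⟨l, hl, hmax⟩ := exists_max_image {w | G.dist u w + 1 = G.dist r w}
    (G.dist r) ⟨u, by simp [dist_eq_one_iff_adj.2 hu]⟩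
  rw [mem_filter_univ] at hl
  exact ⟨l, hl,
    hT.degree_le_one_of_forall_dist_le hu (fun w hw => hmax w (by simpa using hw)) hl⟩

variable [Fintype V] [DecidableRel G.Adj]

theorem exists_darts_degree_sub_one_rpow_le {p : ℝ} (hp : 1 ≤ p) {r u : V} (hu : G.Adj r u) :
    ∃ s : Finset G.Dart,
      (∀ d ∈ s, G.dist r d.fst + 1 = G.dist r d.snd ∧ G.dist u d.snd + 1 = G.dist r d.snd) ∧
      ((G.degree r : ℝ) - 1) ^ p * (ecc G r : ℝ) ^ (1 - p) ≤
        ∑ d ∈ s, |(G.degree d.fst : ℝ) - G.degree d.snd| ^ p := by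
  classical
  obtain ⟨l, hl, hdeg⟩ := hT.exists_degree_le_one_of_adj hu
  obtain ⟨R, hR⟩ := hT.connected.exists_walk_length_eq_dist u l
  have hP : (R.cons hu).length = G.dist r l := by rw [Walk.length_cons, hR, hl]
  refine ⟨(R.cons hu).darts.toFinset, fun d hd => ?_, ?_⟩
  · rw [List.mem_toFinset] at hd
    refine ⟨Walk.dist_fst_add_one_of_mem_darts hP hd,
      Walk.dist_add_one_of_mem_support_of_cons hu hP ?_⟩
    rw [Walk.darts_cons, List.mem_cons] at hd
    rcases hd with rfl | hd
    · exact R.start_mem_support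
    · exact R.dart_snd_mem_support_of_mem_darts hd
  have hdeg_r : 1 ≤ (G.degree r : ℝ) := by
    exact_mod_cast (G.degree_pos_iff_exists_adj r).2 ⟨u, hu⟩
  have hlen_pos : (0 : ℝ) < (R.cons hu).length := by simp only [Walk.length_cons]; positivity
  have hlen_ecc : ((R.cons hu).length : ℝ) ≤ ecc G r := by
    rw [hP]; exact_mod_cast le_sup (f := G.dist r) (mem_univ l)
  have hdeg_l : (G.degree l : ℝ) ≤ 1 := by exact_mod_cast hdeg
  calc ((G.degree r : ℝ) - 1) ^ p * (ecc G r : ℝ) ^ (1 - p)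
      ≤ |(G.degree r : ℝ) - G.degree l| ^ p * ((R.cons hu).length : ℝ) ^ (1 - p) := by
        apply mul_le_mul _ (Real.rpow_le_rpow_of_nonpos hlen_pos hlen_ecc (by linarith))
          (by positivity) (by positivity)
        exact Real.rpow_le_rpow (by linarith) (le_abs.2 (Or.inl (by linarith))) (by linarith)
    _ ≤ _ := Walk.abs_sub_rpow_mul_length_rpow_le (Walk.isPath_of_length_eq_dist _ hP)
        (fun v => (G.degree v : ℝ)) hp

theorem two_mul_degree_mul_le_sum_darts {p : ℝ} (hp : 1 ≤ p) (r : V) :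
    2 * ((G.degree r : ℝ) * (((G.degree r : ℝ) - 1) ^ p * (ecc G r : ℝ) ^ (1 - p))) ≤
      ∑ d : G.Dart, |(G.degree d.fst : ℝ) - G.degree d.snd| ^ p := by
  classical
  have hbranch : ∀ u ∈ G.neighborFinset r, _ := fun u hu =>
    hT.exists_darts_degree_sub_one_rpow_le hp ((mem_neighborFinset _ _ _).1 hu)
  choose! s hs_out hs_le using hbranch
  have hdisj : (G.neighborFinset r : Set V).PairwiseDisjoint s := by
    intro u hu u' hu' hne
    refine Finset.disjoint_left.2 fun d hd hd' => hne ?_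
    exact hT.eq_of_adj_of_dist_add_one ((mem_neighborFinset _ _ _).1 hu)
      ((mem_neighborFinset _ _ _).1 hu') (hs_out u hu d hd).2 (hs_out u' hu' d hd').2
  have hs_symm :
      ∀ d ∈ (G.neighborFinset r).biUnion s, d.symm ∉ (G.neighborFinset r).biUnion s := by
    simp only [mem_biUnion]
    rintro d ⟨u, hu, hd⟩ ⟨u', hu', hd'⟩
    have h₁ := (hs_out u hu d hd).1
    have h₂ := (hs_out u' hu' _ hd').1
    simp only [Dart.symm_toProd, Prod.fst_swap, Prod.snd_swap] at h₂
    omega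
  calc 2 * ((G.degree r : ℝ) * (((G.degree r : ℝ) - 1) ^ p * (ecc G r : ℝ) ^ (1 - p)))
      ≤ 2 * ∑ u ∈ G.neighborFinset r, ∑ d ∈ s u,
          |(G.degree d.fst : ℝ) - G.degree d.snd| ^ p := by
        rw [← card_neighborFinset_eq_degree, ← nsmul_eq_mul, ← sum_const]
        gcongr with u hu
        exact hs_le u hu
    _ = 2 * ∑ d ∈ (G.neighborFinset r).biUnion s,
          |(G.degree d.fst : ℝ) - G.degree d.snd| ^ p := by
        rw [sum_biUnion hdisj]
    _ ≤ _ := two_mul_sum_le_sum_darts hs_symm (fun _ => by positivity) fun d => by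
        show |(G.degree d.snd : ℝ) - G.degree d.fst| ^ p = _
        rw [abs_sub_comm]

end IsTree

end SimpleGraph

theorem stmt15_general {V : Type*} [Fintype V]
    (T : SimpleGraph V) [DecidableRel T.Adj] (hT : T.IsTree)
    (Δ : ℕ) (vΔ : V) (hvΔ : T.degree vΔ = Δ)
    (p : ℝ) (hp : 1 ≤ p) :
    ((Δ : ℝ) * (ecc T vΔ : ℝ) ^ (1 - p)) ^ (1 / p) * ((Δ : ℝ) - 1) ≤ Ap T p := by
  set S := ∑ d : T.Dart, |(T.degree d.fst : ℝ) - T.degree d.snd| ^ p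
  have hAp : Ap T p = (S / 2) ^ (1 / p) := by rw [Ap, SimpleGraph.sum_neighborFinset_eq_sum_darts]
  rcases le_or_gt (Δ : ℝ) 1 with hΔ | hΔ
  · calc _ ≤ (0 : ℝ) := mul_nonpos_of_nonneg_of_nonpos (by positivity) (by linarith)
      _ ≤ Ap T p := hAp ▸ by positivity
  have hbound := hT.two_mul_degree_mul_le_sum_darts hp vΔ
  rw [hvΔ] at hbound
  calc ((Δ : ℝ) * (ecc T vΔ : ℝ) ^ (1 - p)) ^ (1 / p) * ((Δ : ℝ) - 1)
      = ((Δ : ℝ) * (((Δ : ℝ) - 1) ^ p * (ecc T vΔ : ℝ) ^ (1 - p))) ^ (1 / p) := by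
        rw [mul_left_comm _ (_ ^ p), Real.mul_rpow (x := _ ^ p) (by positivity) (by positivity),
          one_div, Real.rpow_rpow_inv (by linarith) (by linarith), mul_comm]
    _ ≤ (S / 2) ^ (1 / p) := by gcongr; linarith
    _ = Ap T p := hAp.symm

theorem stmt15 {V : Type*} [Fintype V]
    (T : SimpleGraph V) [DecidableRel T.Adj] (hT : T.IsTree)
    (Δ : ℕ) (hΔ : ∀ v : V, T.degree v ≤ Δ) (vΔ : V) (hvΔ : T.degree vΔ = Δ)
    (p : ℝ) (hp : 1 ≤ p) :
    ((Δ : ℝ) * (ecc T vΔ : ℝ) ^ (1 - p)) ^ (1 / p) * ((Δ : ℝ) - 1) ≤ Ap T p :=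
  stmt15_general T hT Δ vΔ hvΔ p hp
end

section
/- Let KT be a Kragujevac tree with n vertices whose d branches are γ_i ≅ R_{k_i} for i = 1,…,d. Then A_p(KT)^p = (n − d − 1)/2 + ∑_{i=1}^{d} (k_i·(k_i − 1)^p + |k_i − d + 1|^p). -/
open Finset

/-- Vertices of the Kragujevac tree with `d` branches `R_{k 0}, …, R_{k (d-1)}`:
a central vertex, the `d` branch roots, and, for the `j`-th copy of `P₃` in branch `i`,
a middle vertex `⟨i, j⟩` and a leaf `⟨i, j⟩`. -/
abbrev KTVert (d : ℕ) (k : Fin d → ℕ) : Type :=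
  Unit ⊕ Fin d ⊕ (Σ i : Fin d, Fin (k i)) ⊕ (Σ i : Fin d, Fin (k i))

/-- Adjacency of the Kragujevac tree: the central vertex is adjacent to every branch root,
the root of branch `i` is adjacent to the `k i` middle vertices of its `P₃`'s, and each
middle vertex is adjacent to the corresponding leaf. -/
def KTAdj (d : ℕ) (k : Fin d → ℕ) (x y : KTVert d k) : Prop :=
  (∃ i, x = Sum.inl () ∧ y = Sum.inr (Sum.inl i)) ∨
  (∃ i, y = Sum.inl () ∧ x = Sum.inr (Sum.inl i)) ∨
  (∃ z : Σ i : Fin d, Fin (k i), x = Sum.inr (Sum.inl z.1) ∧ y = Sum.inr (Sum.inr (Sum.inl z))) ∨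
  (∃ z : Σ i : Fin d, Fin (k i), y = Sum.inr (Sum.inl z.1) ∧ x = Sum.inr (Sum.inr (Sum.inl z))) ∨
  (∃ z : Σ i : Fin d, Fin (k i), x = Sum.inr (Sum.inr (Sum.inl z)) ∧ y = Sum.inr (Sum.inr (Sum.inr z))) ∨
  (∃ z : Σ i : Fin d, Fin (k i), y = Sum.inr (Sum.inr (Sum.inl z)) ∧ x = Sum.inr (Sum.inr (Sum.inr z)))

/-- The Kragujevac tree with central vertex of degree `d` and branches `R_{k i}`. -/
def KT (d : ℕ) (k : Fin d → ℕ) : SimpleGraph (KTVert d k) where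
  Adj := KTAdj d k
  symm := by
    constructor
    rintro x y (⟨i, h1, h2⟩ | ⟨i, h1, h2⟩ | ⟨z, h1, h2⟩ | ⟨z, h1, h2⟩ | ⟨z, h1, h2⟩ | ⟨z, h1, h2⟩)
    · exact Or.inr (Or.inl ⟨i, h1, h2⟩)
    · exact Or.inl ⟨i, h1, h2⟩
    · exact Or.inr (Or.inr (Or.inr (Or.inl ⟨z, h1, h2⟩)))
    · exact Or.inr (Or.inr (Or.inl ⟨z, h1, h2⟩))
    · exact Or.inr (Or.inr (Or.inr (Or.inr (Or.inr ⟨z, h1, h2⟩))))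
    · exact Or.inr (Or.inr (Or.inr (Or.inr (Or.inl ⟨z, h1, h2⟩))))
  loopless := by
    constructor
    rintro x (⟨i, h1, h2⟩ | ⟨i, h1, h2⟩ | ⟨z, h1, h2⟩ | ⟨z, h1, h2⟩ | ⟨z, h1, h2⟩ | ⟨z, h1, h2⟩) <;>
      subst h1 <;> simp_all

instance KTAdjDecidable (d : ℕ) (k : Fin d → ℕ) : DecidableRel (KTAdj d k) := fun x y => by
  unfold KTAdj
  exact @instDecidableOr _ _ inferInstance (@instDecidableOr _ _ inferInstance
    (@instDecidableOr _ _ inferInstance (@instDecidableOr _ _ inferInstance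
      (@instDecidableOr _ _ inferInstance inferInstance))))

instance KTAdjDecidable' (d : ℕ) (k : Fin d → ℕ) : DecidableRel (KT d k).Adj :=
  inferInstanceAs (DecidableRel (KTAdj d k))

/-!
Every edge of `KT` joins the centre to a root (degrees `d` and `kᵢ + 1`), a root to a middle
vertex (degrees `kᵢ + 1` and `2`) or a middle vertex to its leaf (degrees `2` and `1`). So
branch `i` contributes `|kᵢ + 1 - d|^p + kᵢ (kᵢ - 1)^p + kᵢ`, and `∑ kᵢ = (n - d - 1) / 2`.
-/

lemma Fintype.sum_sigma_ite_fst_eq {ι M : Type*} [AddCommMonoid M] [Fintype ι] [DecidableEq ι]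
    {κ : ι → Type*} [∀ i, Fintype (κ i)] (i : ι) (g : Sigma κ → M) :
    ∑ x, (if i = x.1 then g x else 0) = ∑ j, g ⟨i, j⟩ := by
  rw [Fintype.sum_sigma, Fintype.sum_eq_single i fun j hj => by simp [Ne.symm hj]]
  simp

lemma Ap_rpow_eq {V : Type*} [Fintype V] (G : SimpleGraph V) [DecidableRel G.Adj] {p : ℝ}
    (hp : p ≠ 0) :
    Ap G p ^ p =
      (∑ u, ∑ v ∈ G.neighborFinset u, |(G.degree u : ℝ) - G.degree v| ^ p) / 2 := by
  rw [Ap, one_div, Real.rpow_inv_rpow _ hp]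
  positivity

lemma natCast_mul_abs_sub_one_rpow (n : ℕ) (p : ℝ) :
    (n : ℝ) * |(n : ℝ) - 1| ^ p = n * ((n : ℝ) - 1) ^ p := by
  rcases Nat.eq_zero_or_pos n with rfl | hn
  · simp
  · rw [abs_of_nonneg (sub_nonneg.mpr (Nat.one_le_cast.mpr hn))]

namespace KTVert

variable {d : ℕ} {k : Fin d → ℕ}

def center : KTVert d k := Sum.inl ()
def root (i : Fin d) : KTVert d k := Sum.inr (Sum.inl i)
def mid (z : Σ i : Fin d, Fin (k i)) : KTVert d k := Sum.inr (Sum.inr (Sum.inl z))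
def leaf (z : Σ i : Fin d, Fin (k i)) : KTVert d k := Sum.inr (Sum.inr (Sum.inr z))

lemma sum_eq {M : Type*} [AddCommMonoid M] (f : KTVert d k → M) :
    ∑ x, f x = f center + ∑ i, f (root i) + ∑ z, f (mid z) + ∑ z, f (leaf z) := by
  simp only [Fintype.sum_sum_type, Fintype.sum_unique, add_assoc]
  rfl

lemma card_eq : Fintype.card (KTVert d k) = 1 + d + 2 * ∑ i, k i := by
  simp only [Fintype.card_sum, Fintype.card_unique, Fintype.card_fin, Fintype.card_sigma]
  ring

end KTVert

namespace KT

open KTVert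

variable {d : ℕ} {k : Fin d → ℕ} {M : Type*} [AddCommMonoid M]

lemma sum_neighborFinset (u : KTVert d k) (f : KTVert d k → M) :
    ∑ v ∈ (KT d k).neighborFinset u, f v = ∑ v, if KTAdj d k u v then f v else 0 := by
  rw [SimpleGraph.neighborFinset_eq_filter, Finset.sum_filter]
  rfl

lemma sum_neighborFinset_center (f : KTVert d k → M) :
    ∑ v ∈ (KT d k).neighborFinset center, f v = ∑ i, f (root i) := by
  rw [sum_neighborFinset, KTVert.sum_eq]
  simp [KTAdj, center, root, mid, leaf]

lemma sum_neighborFinset_root (i : Fin d) (f : KTVert d k → M) :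
    ∑ v ∈ (KT d k).neighborFinset (root i), f v = f center + ∑ j, f (mid ⟨i, j⟩) := by
  rw [sum_neighborFinset, KTVert.sum_eq]
  simp [KTAdj, center, root, mid, leaf, Fintype.sum_sigma_ite_fst_eq]

lemma sum_neighborFinset_mid (z : Σ i : Fin d, Fin (k i)) (f : KTVert d k → M) :
    ∑ v ∈ (KT d k).neighborFinset (mid z), f v = f (root z.1) + f (leaf z) := by
  rw [sum_neighborFinset, KTVert.sum_eq]
  simp [KTAdj, center, root, mid, leaf]

lemma sum_neighborFinset_leaf (z : Σ i : Fin d, Fin (k i)) (f : KTVert d k → M) :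
    ∑ v ∈ (KT d k).neighborFinset (leaf z), f v = f (mid z) := by
  rw [sum_neighborFinset, KTVert.sum_eq]
  simp [KTAdj, center, root, mid, leaf]

lemma degree_center : (KT d k).degree center = d := by
  rw [← SimpleGraph.card_neighborFinset_eq_degree, Finset.card_eq_sum_ones,
    sum_neighborFinset_center]
  simp

lemma degree_root (i : Fin d) : (KT d k).degree (root i) = k i + 1 := by
  rw [← SimpleGraph.card_neighborFinset_eq_degree, Finset.card_eq_sum_ones,
    sum_neighborFinset_root]
  simp [add_comm]

lemma degree_mid (z : Σ i : Fin d, Fin (k i)) : (KT d k).degree (mid z) = 2 := by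
  rw [← SimpleGraph.card_neighborFinset_eq_degree, Finset.card_eq_sum_ones,
    sum_neighborFinset_mid]

lemma degree_leaf (z : Σ i : Fin d, Fin (k i)) : (KT d k).degree (leaf z) = 1 := by
  rw [← SimpleGraph.card_neighborFinset_eq_degree, Finset.card_eq_sum_ones,
    sum_neighborFinset_leaf]

lemma sum_sum_neighborFinset (g : KTVert d k → KTVert d k → M) :
    ∑ u, ∑ v ∈ (KT d k).neighborFinset u, g u v =
      ∑ i, (g center (root i) + g (root i) center +
        ∑ j, (g (root i) (mid ⟨i, j⟩) + g (mid ⟨i, j⟩) (root i) +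
          g (mid ⟨i, j⟩) (leaf ⟨i, j⟩) + g (leaf ⟨i, j⟩) (mid ⟨i, j⟩))) := by
  simp only [KTVert.sum_eq, sum_neighborFinset_center, sum_neighborFinset_root,
    sum_neighborFinset_mid, sum_neighborFinset_leaf, Fintype.sum_sigma, Finset.sum_add_distrib]
  abel

end KT

theorem stmt19_general (d : ℕ) (k : Fin d → ℕ) (p : ℝ) (hp : 0 < p) :
    Ap (KT d k) p ^ p =
      ((Fintype.card (KTVert d k) : ℝ) - d - 1) / 2 +
        ∑ i : Fin d, ((k i : ℝ) * ((k i : ℝ) - 1) ^ p + |(k i : ℝ) - (d : ℝ) + 1| ^ p) := by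
  rw [Ap_rpow_eq _ hp.ne', KT.sum_sum_neighborFinset, KTVert.card_eq]
  simp only [KT.degree_center, KT.degree_root, KT.degree_mid, KT.degree_leaf]
  push_cast
  have branch (n : ℕ) : |(d : ℝ) - (n + 1)| ^ p + |(n : ℝ) + 1 - d| ^ p +
      ∑ _j : Fin n, (|(n : ℝ) + 1 - 2| ^ p + |2 - ((n : ℝ) + 1)| ^ p + |(2 : ℝ) - 1| ^ p +
        |(1 : ℝ) - 2| ^ p) = 2 * (n + (n * ((n : ℝ) - 1) ^ p + |(n : ℝ) - d + 1| ^ p)) := by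
    rw [abs_sub_comm (d : ℝ), abs_sub_comm 2, Finset.sum_const, Finset.card_univ,
      Fintype.card_fin, nsmul_eq_mul, ← natCast_mul_abs_sub_one_rpow]
    norm_num
    ring_nf
  rw [Finset.sum_congr rfl fun i _ => branch (k i), ← Finset.mul_sum, Finset.sum_add_distrib]
  ring

theorem stmt19 (d : ℕ) (hd : 2 ≤ d) (k : Fin d → ℕ) (hk : ∀ i, 2 ≤ k i)
    (p : ℝ) (hp : 0 < p) :
    Ap (KT d k) p ^ p =
      ((Fintype.card (KTVert d k) : ℝ) - d - 1) / 2 +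
        ∑ i : Fin d, ((k i : ℝ) * ((k i : ℝ) - 1) ^ p + |(k i : ℝ) - (d : ℝ) + 1| ^ p) :=
  stmt19_general d k p hp
end
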